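/- arXiv:0706.0673 — 2 statements merged into one kernel-verified Lean document; each statement's English description precedes it below -/
import Mathlib

section
/- Let ‖·‖ be a seminorm on a finite-dimensional real vector space H that takes integer values on the points of a full lattice L ⊆ H. Then the rational points (points of L ⊗ Q) lying on the boundary of the unit ball B = {c : ‖c‖ ≤ 1} are dense in that boundary, provided the unit ball is compact. -/
/-!
A seminorm on a finite-dimensional real space is convex, hence continuous, and it takes
rational values at rational points (clear denominators and use integrality on the lattice).
So the radial projection `x ↦ (N x)⁻¹ • x` is continuous on the open set `N x ≠ 0`, fixes the
unit sphere, and sends rational points to rational points of the sphere; applying it to the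
dense set of rational points approximates every point of the sphere.
-/

open Set

lemma Seminorm.continuous_of_finiteDimensional {E : Type*} [NormedAddCommGroup E]
    [NormedSpace ℝ E] [FiniteDimensional ℝ E] (N : Seminorm ℝ E) : Continuous N :=
  continuousOn_univ.mp (N.convexOn.continuousOn isOpen_univ)

lemma Seminorm.apply_inv_self_smul_self {E : Type*} [AddCommGroup E] [Module ℝ E]
    (N : Seminorm ℝ E) {x : E} (hx : N x ≠ 0) : N ((N x)⁻¹ • x) = 1 := by
  rw [map_smul_eq_mul, Real.norm_eq_abs, abs_inv, abs_of_nonneg (apply_nonneg N x),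
    inv_mul_cancel₀ hx]

lemma Seminorm.mem_closure_of_dense_of_inv_self_smul_self_mem {E : Type*} [AddCommGroup E]
    [Module ℝ E] [TopologicalSpace E] [ContinuousSMul ℝ E] (N : Seminorm ℝ E)
    (hN : Continuous N) {A B : Set E} (hA : Dense A)
    (hAB : ∀ x ∈ A, N x ≠ 0 → (N x)⁻¹ • x ∈ B) {c : E} (hc : N c = 1) : c ∈ closure B := by
  set U : Set E := {x | N x ≠ 0}
  have hcU : c ∈ U := by simp [U, hc]
  have hcont : ContinuousWithinAt (fun x => (N x)⁻¹ • x) (U ∩ A) c :=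
    ((hN.continuousAt.inv₀ (hc ▸ one_ne_zero)).smul continuousAt_id).continuousWithinAt
  simpa [hc] using hcont.mem_closure
    (hA.open_subset_closure_inter (isOpen_ne_fun hN continuous_const) hcU)
    fun x ⟨hxU, hxA⟩ => hAB x hxA hxU

lemma dense_setOf_forall_exists_ratCast (ι : Type*) :
    Dense {c : ι → ℝ | ∀ i, ∃ q : ℚ, c i = q} := by
  convert dense_pi univ fun (i : ι) _ => Rat.denseRange_cast (𝕜 := ℝ) using 1
  ext c
  simp [eq_comm]

lemma exists_nat_mul_eq_intCast {ι : Type*} [Fintype ι] (q : ι → ℚ) :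
    ∃ d : ℕ, d ≠ 0 ∧ ∃ z : ι → ℤ, ∀ i, (d : ℚ) * q i = z i := by
  choose k hk using fun i => Finset.dvd_prod_of_mem (fun j => (q j).den) (Finset.mem_univ i)
  refine ⟨∏ i, (q i).den, Finset.prod_ne_zero_iff.mpr fun i _ => (q i).den_nz,
    fun i => (q i).num * k i, fun i => ?_⟩
  rw [hk i]
  push_cast
  rw [← Rat.den_mul_eq_num]
  ring

lemma Seminorm.exists_apply_eq_ratCast {ι : Type*} [Fintype ι] (N : Seminorm ℝ (ι → ℝ))
    (hint : ∀ z : ι → ℤ, ∃ k : ℤ, N (fun i => (z i : ℝ)) = k)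
    {c : ι → ℝ} (hc : ∀ i, ∃ q : ℚ, c i = q) : ∃ ρ : ℚ, N c = ρ := by
  choose q hq using hc
  obtain ⟨d, hd, z, hz⟩ := exists_nat_mul_eq_intCast q
  obtain ⟨k, hk⟩ := hint z
  have hcz : c = (d : ℝ)⁻¹ • fun i => (z i : ℝ) := by
    ext i
    rw [hq i, Pi.smul_apply, smul_eq_mul, eq_inv_mul_iff_mul_eq₀ (Nat.cast_ne_zero.mpr hd)]
    exact_mod_cast hz i
  refine ⟨k / d, ?_⟩
  rw [hcz, map_smul_eq_mul, hk, norm_inv, Real.norm_natCast]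
  push_cast
  ring

theorem rational_points_dense_in_unit_sphere_general {m : ℕ}
    (N : Seminorm ℝ (Fin m → ℝ))
    (hint : ∀ z : Fin m → ℤ, ∃ k : ℤ, N (fun i => (z i : ℝ)) = (k : ℤ)) :
    {c : Fin m → ℝ | N c = 1} ⊆
      closure {c : Fin m → ℝ | N c = 1 ∧ ∀ i, ∃ q : ℚ, c i = (q : ℝ)} := by
  intro c hc
  refine N.mem_closure_of_dense_of_inv_self_smul_self_mem N.continuous_of_finiteDimensional
    (dense_setOf_forall_exists_ratCast _) (fun x hx hNx => ?_) hc
  refine ⟨N.apply_inv_self_smul_self hNx, fun i => ?_⟩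
  obtain ⟨ρ, hρ⟩ := N.exists_apply_eq_ratCast hint hx
  obtain ⟨q, hq⟩ := hx i
  exact ⟨ρ⁻¹ * q, by simp [hρ, hq]⟩

/-- Let `N` be a seminorm on `ℝᵐ` taking integer values on the integer lattice, whose
unit ball is compact.  Then the rational points on the boundary of the unit ball are
dense in that boundary. -/
theorem rational_points_dense_in_unit_sphere {m : ℕ}
    (N : Seminorm ℝ (Fin m → ℝ))
    (hint : ∀ z : Fin m → ℤ, ∃ k : ℤ, N (fun i => (z i : ℝ)) = (k : ℤ))
    (hcpt : IsCompact {c : Fin m → ℝ | N c ≤ 1}) :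
    {c : Fin m → ℝ | N c = 1} ⊆
      closure {c : Fin m → ℝ | N c = 1 ∧ ∀ i, ∃ q : ℚ, c i = (q : ℝ)} :=
  rational_points_dense_in_unit_sphere_general N hint
end

section
/- Let C be a compact convex polytope that is the intersection of the standard simplex Δ ⊆ R^n with a linear subspace, and let v be an extreme point of C with rational coordinates. If x is the minimal positive integral multiple of v and x = Σᵢ xᵢ with each xᵢ ∈ cone(C) ∩ Z^n nonzero, then each xᵢ is a positive rational multiple of v. -/
/-!
Write `xᵢ = sᵢ • cᵢ` with `sᵢ > 0` and `cᵢ ∈ C`. Summing coordinates gives `∑ sᵢ = t`, so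
`v = ∑ (sᵢ / t) • cᵢ` is a convex combination of points of `C` with positive weights. Since `C \ {v}`
is convex, the `cᵢ` different from `v` would have their barycentre in `C \ {v}`, yet that barycentre
is forced to be `v`; hence every `cᵢ = v`. Finally `sᵢ` is rational because it is the quotient of an
integer coordinate of `xᵢ` by a nonzero rational coordinate of `v`.
-/

open Finset

theorem Convex.eq_of_sum_smul_eq_sum_smul_of_mem_extremePoints {𝕜 E ι : Type*} [Field 𝕜]
    [LinearOrder 𝕜] [IsStrictOrderedRing 𝕜] [AddCommGroup E] [Module 𝕜 E] {C : Set E}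
    (hC : Convex 𝕜 C) {v : E} (hv : v ∈ C.extremePoints 𝕜) {s : Finset ι} {w : ι → 𝕜}
    {c : ι → E} (hw : ∀ i ∈ s, 0 ≤ w i) (hc : ∀ i ∈ s, c i ∈ C)
    (hwc : ∑ i ∈ s, w i • c i = (∑ i ∈ s, w i) • v) {i : ι} (hi : i ∈ s) (hwi : 0 < w i) :
    c i = v := by
  classical
  by_contra hne
  have hpos : 0 < ∑ j ∈ s with c j ≠ v, w j :=
    sum_pos' (fun j hj ↦ hw j (mem_filter.1 hj).1) ⟨i, mem_filter.2 ⟨hi, hne⟩, hwi⟩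
  have hmem : (s.filter (c · ≠ v)).centerMass w c ∈ C \ {v} :=
    (hC.mem_extremePoints_iff_convex_sdiff.1 hv).2.centerMass_mem
      (fun j hj ↦ hw j (mem_filter.1 hj).1) hpos
      (fun j hj ↦ ⟨hc j (mem_filter.1 hj).1, (mem_filter.1 hj).2⟩)
  have hon : ∑ j ∈ s with ¬c j ≠ v, w j • c j = (∑ j ∈ s with ¬c j ≠ v, w j) • v := by
    rw [sum_smul]
    exact sum_congr rfl fun j hj ↦ by rw [not_not.1 (mem_filter.1 hj).2]
  have hoff : ∑ j ∈ s with c j ≠ v, w j • c j = (∑ j ∈ s with c j ≠ v, w j) • v := by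
    have h := (sum_filter_add_sum_filter_not s (c · ≠ v) _).trans hwc
    rw [← sum_filter_add_sum_filter_not s (c · ≠ v) w, add_smul, hon] at h
    exact add_right_cancel h
  apply hmem.2
  rw [centerMass, hoff, smul_smul, inv_mul_cancel₀ hpos.ne', one_smul, Set.mem_singleton_iff]

theorem sum_smul_apply_of_mem_stdSimplex {𝕜 ι : Type*} [Semiring 𝕜] [PartialOrder 𝕜]
    [Fintype ι] {y : ι → 𝕜} (hy : y ∈ stdSimplex 𝕜 ι) (a : 𝕜) : ∑ j, (a • y) j = a := by
  simp only [Pi.smul_apply, smul_eq_mul, ← mul_sum, hy.2, mul_one]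

theorem decomposition_of_minimal_multiple_of_extreme_point_general {n : ℕ} {ι : Type*}
    [Fintype ι]
    (V : Submodule ℝ (Fin n → ℝ))
    (C : Set (Fin n → ℝ))
    (hC : C = {y | (∀ i, 0 ≤ y i) ∧ ∑ i, y i = 1} ∩ (V : Set (Fin n → ℝ)))
    (v : Fin n → ℝ) (hv : v ∈ Set.extremePoints ℝ C)
    (hvQ : ∀ i, ∃ q : ℚ, v i = (q : ℝ))
    (t : ℝ)
    (x : Fin n → ℝ) (hx : x = t • v)
    (xs : ι → (Fin n → ℝ))
    (hxs : ∀ i, xs i ∈ {z | ∃ s : ℝ, 0 ≤ s ∧ ∃ c ∈ C, z = s • c})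
    (hxsZ : ∀ i j, ∃ z : ℤ, xs i j = (z : ℝ))
    (hxsne : ∀ i, xs i ≠ 0)
    (hsum : x = ∑ i, xs i) :
    ∀ i, ∃ c : ℚ, 0 < c ∧ xs i = (c : ℝ) • v := by
  have hCΔ : C ⊆ stdSimplex ℝ (Fin n) := hC ▸ Set.inter_subset_left
  have hCconv : Convex ℝ C := hC ▸ (convex_stdSimplex ℝ (Fin n)).inter V.convex
  choose s hs c hcC hxsc using hxs
  have hspos : ∀ i, 0 < s i := fun i ↦
    (hs i).lt_of_ne fun h ↦ hxsne i (by rw [hxsc i, ← h, zero_smul])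
  have hdecomp : ∑ i, s i • c i = t • v := by
    rw [← hx, hsum]
    exact sum_congr rfl fun i _ ↦ (hxsc i).symm
  have hst : ∑ i, s i = t := by
    have h := congrArg (fun y ↦ ∑ j, y j) hdecomp
    simp only [Finset.sum_apply] at h
    rwa [sum_comm, sum_smul_apply_of_mem_stdSimplex (hCΔ hv.1),
      sum_congr rfl fun i _ ↦ sum_smul_apply_of_mem_stdSimplex (hCΔ (hcC i)) (s i)] at h
  have hcv : ∀ i, c i = v := fun i ↦
    hCconv.eq_of_sum_smul_eq_sum_smul_of_mem_extremePoints hv (fun i _ ↦ hs i)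
      (fun i _ ↦ hcC i) (hst ▸ hdecomp) (mem_univ i) (hspos i)
  obtain ⟨j, -, hj⟩ := exists_ne_zero_of_sum_ne_zero ((hCΔ hv.1).2 ▸ one_ne_zero)
  intro i
  obtain ⟨q, hq⟩ := hvQ j
  obtain ⟨z, hz⟩ := hxsZ i j
  have hsi : s i = ((z / q : ℚ) : ℝ) := by
    have hq0 : (q : ℝ) ≠ 0 := hq ▸ hj
    have h : s i * q = z := by rw [← hq, ← hz, hxsc i, hcv i, Pi.smul_apply, smul_eq_mul]
    push_cast
    rw [← h, mul_div_cancel_right₀ _ hq0]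
  exact ⟨z / q, by exact_mod_cast hsi ▸ hspos i, by rw [hxsc i, hcv i, hsi]⟩

/-- Let `C` be the intersection of the standard simplex with a linear subspace, `v` an
extreme point of `C` with rational coordinates, and `x` the minimal positive integral
multiple of `v`.  If `x = Σ xᵢ` with each `xᵢ` a nonzero integral point of the cone
over `C`, then each `xᵢ` is a positive rational multiple of `v`. -/
theorem decomposition_of_minimal_multiple_of_extreme_point {n : ℕ} {ι : Type*}
    [Fintype ι]
    (V : Submodule ℝ (Fin n → ℝ))
    (C : Set (Fin n → ℝ))
    (hC : C = {y | (∀ i, 0 ≤ y i) ∧ ∑ i, y i = 1} ∩ (V : Set (Fin n → ℝ)))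
    (v : Fin n → ℝ) (hv : v ∈ Set.extremePoints ℝ C)
    (hvQ : ∀ i, ∃ q : ℚ, v i = (q : ℝ))
    (t : ℝ) (ht : 0 < t)
    (x : Fin n → ℝ) (hx : x = t • v)
    (hxZ : ∀ i, ∃ z : ℤ, x i = (z : ℝ))
    (hmin : ∀ t' : ℝ, 0 < t' → (∀ i, ∃ z : ℤ, t' * v i = (z : ℝ)) → t ≤ t')
    (xs : ι → (Fin n → ℝ))
    (hxs : ∀ i, xs i ∈ {z | ∃ s : ℝ, 0 ≤ s ∧ ∃ c ∈ C, z = s • c})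
    (hxsZ : ∀ i j, ∃ z : ℤ, xs i j = (z : ℝ))
    (hxsne : ∀ i, xs i ≠ 0)
    (hsum : x = ∑ i, xs i) :
    ∀ i, ∃ c : ℚ, 0 < c ∧ xs i = (c : ℝ) • v :=
  decomposition_of_minimal_multiple_of_extreme_point_general V C hC v hv hvQ t x hx xs hxs hxsZ
    hxsne hsum
end
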